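/- Let K be a field of characteristic p, and let κ ∈ K^× with associated integer k, 0 < k < p, satisfying κk ≡ -1 (mod p) (i.e., κ·k = -1 in K when κ ∈ F_p^×). Define Φ(t,z;κ) = ∏_{a=1}^n (t - z_a; κ)_k, η_a(t,z) = (1/(t - z_a)) ∏_{j=1}^{a-1} (t - z_j + 1)/(t - z_j), and Q_a(t,z;κ) = Φ(t,z;κ) η_a(t,z). Then Q_a(t,z;κ) equals the polynomial (∏_{j=1}^{a-1} (t - z_j - κ; κ)_k) · (t - z_a - κ; κ)_{k-1} · (∏_{j=a+1}^{n} (t - z_j; κ)_k). In particular, Q_a is a polynomial in t and z. -/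
import Mathlib


open Finset Polynomial

/-- The κ-Pochhammer polynomial `(t;κ)_m = ∏_{i=1}^m (t-(i-1)κ)`. -/
def poch {R : Type*} [CommRing R] (κ t : R) (m : ℕ) : R :=
  ∏ i ∈ Finset.range m, (t - (i : R) * κ)

lemma poch_succ' {R : Type*} [CommRing R] (κ u : R) (m : ℕ) :
    poch κ u (m + 1) = u * poch κ (u - κ) m := by
  unfold poch
  rw [Finset.prod_range_succ']
  simp only [Nat.cast_zero, zero_mul, sub_zero]
  rw [mul_comm]
  congr 1
  refine Finset.prod_congr rfl fun i _ => ?_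
  push_cast; ring

lemma poch_key {R : Type*} [CommRing R] (κ u : R) (k : ℕ) (hκ : κ * (k : R) = -1) :
    poch κ u k * (u + 1) = u * poch κ (u - κ) k := by
  have h : u - (k : R) * κ = u + 1 := by rw [mul_comm, hκ]; ring
  calc poch κ u k * (u + 1) = poch κ u (k + 1) := by
        unfold poch; rw [Finset.prod_range_succ, h]
    _ = u * poch κ (u - κ) k := poch_succ' κ u k

/-- `Q_a(t,z;κ) = Φ(t,z;κ)·η_a(t,z)` equals an explicit product of Pochhammer
polynomials; stated as the denominator-free polynomial identity
`Φ·∏_{j<a}(t-z_j+1) = Q_a^{RHS}·(t-z_a)·∏_{j<a}(t-z_j)` in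
`K[z_1,…,z_n][t]`. -/
theorem weight_function_polynomial {p : ℕ} [Fact p.Prime] {K : Type*} [Field K]
    [CharP K p] (n : ℕ) (k : ℕ) (hk : 0 < k) (hkp : k < p) (κ : K)
    (hκ : κ * (k : K) = -1) (a : Fin n) :
    let R := Polynomial (MvPolynomial (Fin n) K)
    let t : R := Polynomial.X
    let Z : Fin n → R := fun j => Polynomial.C (MvPolynomial.X j)
    let κ' : R := Polynomial.C (MvPolynomial.C κ)
    let Φ : R := ∏ b : Fin n, poch κ' (t - Z b) k
    Φ * ∏ j ∈ univ.filter (· < a), (t - Z j + 1) =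
      ((∏ j ∈ univ.filter (· < a), poch κ' (t - Z j - κ') k) *
          poch κ' (t - Z a - κ') (k - 1) *
          ∏ j ∈ univ.filter (fun j => a < j), poch κ' (t - Z j) k) *
        (t - Z a) * ∏ j ∈ univ.filter (· < a), (t - Z j) := by
  intro R t Z κ' Φ
  have hκ' : κ' * (k : R) = -1 := by
    have h := congrArg (fun x : K => (Polynomial.C (MvPolynomial.C x) : R)) hκ
    simpa using h
  -- split Φ
  have hsplit : Φ = (∏ j ∈ univ.filter (· < a), poch κ' (t - Z j) k) *
      (poch κ' (t - Z a) k *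
        ∏ j ∈ univ.filter (fun j => a < j), poch κ' (t - Z j) k) := by
    have hset : (univ.filter fun b : Fin n => ¬ b < a) =
        insert a (univ.filter fun j : Fin n => a < j) := by
      ext b
      simp only [mem_filter, mem_univ, true_and, not_lt, mem_insert]
      constructor
      · intro h
        rcases h.lt_or_eq with h' | h'
        · exact Or.inr h'
        · exact Or.inl h'.symm
      · rintro (rfl | h)
        · exact le_refl _
        · exact h.le
    have hna : a ∉ univ.filter fun j : Fin n => a < j := by simp
    rw [show Φ = ∏ b : Fin n, poch κ' (t - Z b) k from rfl,
      ← Finset.prod_filter_mul_prod_filter_not univ (fun b => b < a), hset,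
      Finset.prod_insert hna]
  have ha : poch κ' (t - Z a) k = (t - Z a) * poch κ' (t - Z a - κ') (k - 1) := by
    obtain ⟨m, rfl⟩ : ∃ m, k = m + 1 := ⟨k - 1, (Nat.succ_pred_eq_of_pos hk).symm⟩
    simpa using poch_succ' κ' (t - Z a) m
  have hAC : (∏ j ∈ univ.filter (· < a), poch κ' (t - Z j) k) *
      (∏ j ∈ univ.filter (· < a), (t - Z j + 1)) =
      (∏ j ∈ univ.filter (· < a), (t - Z j)) *
        ∏ j ∈ univ.filter (· < a), poch κ' (t - Z j - κ') k := by
    rw [← Finset.prod_mul_distrib, ← Finset.prod_mul_distrib]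
    exact Finset.prod_congr rfl fun j _ => poch_key κ' (t - Z j) k hκ'
  rw [hsplit, ha]
  set A := ∏ j ∈ univ.filter (· < a), poch κ' (t - Z j) k
  set B := ∏ j ∈ univ.filter (fun j => a < j), poch κ' (t - Z j) k
  set C := ∏ j ∈ univ.filter (· < a), (t - Z j + 1)
  set A' := ∏ j ∈ univ.filter (· < a), poch κ' (t - Z j - κ') k
  set C' := ∏ j ∈ univ.filter (· < a), (t - Z j)
  set pa := poch κ' (t - Z a - κ') (k - 1)
  linear_combination (t - Z a) * pa * B * hAC
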